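/- Let h : [0,∞) → ℝ be measurable with ∫₀^∞ h(x) dx = 0, ∫₀^∞ |x·h(x)| dx < ∞ and ∫₀^∞ h(x)²·e^{x} dx < ∞, and define h₀(x) = h(x) − (x − 1)·e^{−x}·∫₀^∞ s·h(s) ds. Then ∫₀^∞ h₀(x)²·e^{x} dx = ∫₀^∞ h(x)²·e^{x} dx − (∫₀^∞ x·h(x) dx)², and ∫₀^∞ ψ(x)·h₀(x) dx = ∫₀^∞ ψ(x)·h(x) dx, where ψ(s) = −1/20 + (2/5)e^{−3s} − (9/10)e^{−2s} + (1/2)e^{−s}. -/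

import Mathlib

/-!
Put `φ(x) = (x - 1) e^{-x}` and `⟨f, g⟩ = ∫₀^∞ f g e^x`, so that `h₀ = h - c φ` with
`c = ∫₀^∞ x h`. The Gamma integrals `∫₀^∞ xⁿ e^{-rx} = n! / r^{n+1}` give `⟨φ, φ⟩ = 1`, and
`⟨h, φ⟩ = ∫₀^∞ (x - 1) h = c` because `∫₀^∞ h = 0`; expanding `⟨h - c φ, h - c φ⟩` gives the first
identity. For the second, `ψ φ` is a combination of the `(x - 1) e^{-kx}`, `k = 1, …, 4`, whose
integrals `1/k² - 1/k` cancel, so `∫₀^∞ ψ φ = 0`.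
-/

open Real MeasureTheory Set

/-- The projection `ψ` from the paper. -/
noncomputable def psi (s : ℝ) : ℝ :=
  -1/20 + (2/5) * exp (-(3*s)) - (9/10) * exp (-(2*s)) + (1/2) * exp (-s)

section ExpMoments

open scoped Nat

variable {r : ℝ}

lemma integrableOn_pow_mul_exp_neg_mul (n : ℕ) (hr : 0 < r) :
    IntegrableOn (fun x : ℝ => x ^ n * exp (-(r * x))) (Ioi 0) := by
  have hn : (-1 : ℝ) < n := neg_one_lt_zero.trans_le n.cast_nonneg
  refine (integrableOn_rpow_mul_exp_neg_mul_rpow hn one_pos hr).congr_fun (fun x _ => ?_)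
    measurableSet_Ioi
  simp

lemma integral_pow_mul_exp_neg_mul (n : ℕ) (hr : 0 < r) :
    ∫ x in Ioi (0:ℝ), x ^ n * exp (-(r * x)) = n ! / r ^ (n + 1) := by
  have hGamma := integral_rpow_mul_exp_neg_mul_Ioi (a := n + 1) (by positivity) hr
  rw [add_sub_cancel_right, Gamma_nat_eq_factorial, ← Nat.cast_succ, rpow_natCast] at hGamma
  calc ∫ x in Ioi (0:ℝ), x ^ n * exp (-(r * x))
      = ∫ x in Ioi (0:ℝ), x ^ (n : ℝ) * exp (-(r * x)) :=
        setIntegral_congr_fun measurableSet_Ioi fun x _ => by simp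
    _ = n ! / r ^ (n + 1) := by rw [hGamma, div_pow, one_pow, one_div_mul_eq_div]

lemma integrableOn_sub_one_mul_exp_neg_mul (hr : 0 < r) :
    IntegrableOn (fun x : ℝ => (x - 1) * exp (-(r * x))) (Ioi 0) :=
  IntegrableOn.congr_fun
    ((integrableOn_pow_mul_exp_neg_mul 1 hr).sub' (integrableOn_pow_mul_exp_neg_mul 0 hr))
    (fun x _ => by ring) measurableSet_Ioi

lemma integral_sub_one_mul_exp_neg_mul (hr : 0 < r) :
    ∫ x in Ioi (0:ℝ), (x - 1) * exp (-(r * x)) = 1 / r ^ 2 - 1 / r := by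
  rw [setIntegral_congr_fun measurableSet_Ioi
      (g := fun x => x ^ 1 * exp (-(r * x)) - x ^ 0 * exp (-(r * x))) (fun x _ => by ring),
    integral_sub (integrableOn_pow_mul_exp_neg_mul 1 hr) (integrableOn_pow_mul_exp_neg_mul 0 hr),
    integral_pow_mul_exp_neg_mul 1 hr, integral_pow_mul_exp_neg_mul 0 hr]
  simp

end ExpMoments

lemma integrableOn_sub_one_sq_mul_exp_neg :
    IntegrableOn (fun x : ℝ => (x - 1) ^ 2 * exp (-x)) (Ioi 0) := by
  have h2 := integrableOn_pow_mul_exp_neg_mul 2 one_pos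
  have h1 := integrableOn_sub_one_mul_exp_neg_mul one_pos
  have h0 := integrableOn_pow_mul_exp_neg_mul 0 one_pos
  refine IntegrableOn.congr_fun (Integrable.sub' (h2.sub' (h1.const_mul 2)) h0) (fun x _ => ?_)
    measurableSet_Ioi
  simp only [one_mul]
  ring

lemma integral_sub_one_sq_mul_exp_neg :
    ∫ x in Ioi (0:ℝ), (x - 1) ^ 2 * exp (-x) = 1 := by
  have h2 := integrableOn_pow_mul_exp_neg_mul 2 one_pos
  have h1 := integrableOn_sub_one_mul_exp_neg_mul one_pos
  have h0 := integrableOn_pow_mul_exp_neg_mul 0 one_pos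
  rw [setIntegral_congr_fun measurableSet_Ioi (g := fun x =>
      x ^ 2 * exp (-(1 * x)) - 2 * ((x - 1) * exp (-(1 * x))) - x ^ 0 * exp (-(1 * x)))
      (fun x _ => by simp only [one_mul]; ring),
    integral_sub (h2.sub' (h1.const_mul 2)) h0, integral_sub h2 (h1.const_mul 2),
    integral_const_mul,
    integral_pow_mul_exp_neg_mul 2 one_pos, integral_sub_one_mul_exp_neg_mul one_pos,
    integral_pow_mul_exp_neg_mul 0 one_pos]
  norm_num

lemma psi_mul_sub_one_mul_exp_neg (x : ℝ) :
    psi x * ((x - 1) * exp (-x)) =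
      -1/20 * ((x - 1) * exp (-(1 * x))) + 1/2 * ((x - 1) * exp (-(2 * x)))
        - 9/10 * ((x - 1) * exp (-(3 * x))) + 2/5 * ((x - 1) * exp (-(4 * x))) := by
  have hexp (k : ℝ) : exp (-(k * x)) * exp (-x) = exp (-((k + 1) * x)) := by
    rw [← exp_add]; ring_nf
  have h1 := hexp 1
  have h2 := hexp 2
  have h3 := hexp 3
  norm_num only [one_mul] at h1 h2 h3 ⊢
  unfold psi
  linear_combination (1/2 * (x - 1)) * h1 - (9/10 * (x - 1)) * h2 + (2/5 * (x - 1)) * h3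

lemma integral_psi_mul_sub_one_mul_exp_neg :
    ∫ x in Ioi (0:ℝ), psi x * ((x - 1) * exp (-x)) = 0 := by
  have I (k : ℝ) (hk : 0 < k) := integrableOn_sub_one_mul_exp_neg_mul hk
  have h1 := (I 1 one_pos).const_mul (-1/20)
  have h2 := (I 2 two_pos).const_mul (1/2)
  have h3 := (I 3 three_pos).const_mul (9/10)
  have h4 := (I 4 four_pos).const_mul (2/5)
  rw [setIntegral_congr_fun measurableSet_Ioi (fun x _ => psi_mul_sub_one_mul_exp_neg x),
    integral_add (Integrable.sub' (h1.fun_add h2) h3) h4, integral_sub (h1.fun_add h2) h3,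
    integral_add h1 h2,
    integral_const_mul, integral_const_mul, integral_const_mul, integral_const_mul,
    integral_sub_one_mul_exp_neg_mul one_pos, integral_sub_one_mul_exp_neg_mul two_pos,
    integral_sub_one_mul_exp_neg_mul three_pos, integral_sub_one_mul_exp_neg_mul four_pos]
  norm_num

lemma abs_psi_le_two {x : ℝ} (hx : 0 ≤ x) : |psi x| ≤ 2 := by
  have e1 : exp (-x) ≤ 1 := exp_le_one_iff.mpr (by linarith)
  have e2 : exp (-(2 * x)) ≤ 1 := exp_le_one_iff.mpr (by linarith)
  have e3 : exp (-(3 * x)) ≤ 1 := exp_le_one_iff.mpr (by linarith)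
  have := exp_pos (-x)
  have := exp_pos (-(2 * x))
  have := exp_pos (-(3 * x))
  rw [abs_le]
  constructor <;> unfold psi <;> linarith

lemma continuous_psi : Continuous psi := by
  unfold psi
  fun_prop

lemma integrableOn_psi_mul {h : ℝ → ℝ} (hint : IntegrableOn h (Ioi 0)) :
    IntegrableOn (fun x => psi x * h x) (Ioi 0) :=
  hint.bdd_mul continuous_psi.aestronglyMeasurable
    (ae_restrict_of_forall_mem measurableSet_Ioi fun _ hx => by
      simpa only [Real.norm_eq_abs] using abs_psi_le_two (le_of_lt hx))

section Projection

variable {h : ℝ → ℝ}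

lemma integral_sub_one_mul_eq_integral_mul (hint : IntegrableOn h (Ioi 0))
    (hzero : ∫ x in Ioi (0:ℝ), h x = 0) (hxh : IntegrableOn (fun x => x * h x) (Ioi 0)) :
    ∫ x in Ioi (0:ℝ), (x - 1) * h x = ∫ x in Ioi (0:ℝ), x * h x := by
  rw [setIntegral_congr_fun measurableSet_Ioi (g := fun x => x * h x - h x) (fun x _ => by ring),
    integral_sub hxh hint, hzero, sub_zero]

lemma integral_sq_sub_mul_exp (c : ℝ)
    (hxh : IntegrableOn (fun x => (x - 1) * h x) (Ioi 0))
    (hh2 : IntegrableOn (fun x => h x ^ 2 * exp x) (Ioi 0)) :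
    ∫ x in Ioi (0:ℝ), (h x - (x - 1) * exp (-x) * c) ^ 2 * exp x =
      (∫ x in Ioi (0:ℝ), h x ^ 2 * exp x) - 2 * c * (∫ x in Ioi (0:ℝ), (x - 1) * h x) + c ^ 2 := by
  have hexp (x : ℝ) : exp (-x) * exp x = 1 := by rw [← exp_add, neg_add_cancel, exp_zero]
  have hcross := hxh.const_mul (2 * c)
  have hsq := integrableOn_sub_one_sq_mul_exp_neg.const_mul (c ^ 2)
  rw [setIntegral_congr_fun measurableSet_Ioi (g := fun x =>
      h x ^ 2 * exp x - 2 * c * ((x - 1) * h x) + c ^ 2 * ((x - 1) ^ 2 * exp (-x)))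
      (fun x _ => by
        linear_combination (c ^ 2 * (x - 1) ^ 2 * exp (-x) - 2 * c * (x - 1) * h x) * hexp x),
    integral_add (hh2.sub' hcross) hsq, integral_sub hh2 hcross, integral_const_mul,
    integral_const_mul, integral_sub_one_sq_mul_exp_neg, mul_one]

lemma integral_psi_mul_sub_mul (c : ℝ) (hint : IntegrableOn h (Ioi 0)) :
    ∫ x in Ioi (0:ℝ), psi x * (h x - (x - 1) * exp (-x) * c) = ∫ x in Ioi (0:ℝ), psi x * h x := by
  have hφ : IntegrableOn (fun x : ℝ => (x - 1) * exp (-x)) (Ioi 0) := by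
    simpa only [one_mul] using integrableOn_sub_one_mul_exp_neg_mul one_pos
  rw [setIntegral_congr_fun measurableSet_Ioi (g := fun x =>
      psi x * h x - c * (psi x * ((x - 1) * exp (-x)))) (fun x _ => by ring),
    integral_sub (integrableOn_psi_mul hint) ((integrableOn_psi_mul hφ).const_mul c),
    integral_const_mul, integral_psi_mul_sub_one_mul_exp_neg, mul_zero, sub_zero]

end Projection

theorem stmt_15_general (h : ℝ → ℝ)
    (hint : IntegrableOn h (Ioi 0))
    (hzero : (∫ x in Ioi (0:ℝ), h x) = 0)
    (hxh : IntegrableOn (fun x => x * h x) (Ioi 0))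
    (hh2 : IntegrableOn (fun x => (h x)^2 * exp x) (Ioi 0))
    (h₀ : ℝ → ℝ)
    (h₀def : ∀ x, h₀ x = h x - (x - 1) * exp (-x) * (∫ s in Ioi (0:ℝ), s * h s)) :
    (∫ x in Ioi (0:ℝ), (h₀ x)^2 * exp x) =
      (∫ x in Ioi (0:ℝ), (h x)^2 * exp x) - (∫ x in Ioi (0:ℝ), x * h x)^2 ∧
    (∫ x in Ioi (0:ℝ), psi x * h₀ x) = (∫ x in Ioi (0:ℝ), psi x * h x) := by
  simp only [h₀def]
  have hxh' : IntegrableOn (fun x => (x - 1) * h x) (Ioi 0) :=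
    IntegrableOn.congr_fun (hxh.sub' hint) (fun x _ => by ring) measurableSet_Ioi
  refine ⟨?_, integral_psi_mul_sub_mul _ hint⟩
  rw [integral_sq_sub_mul_exp _ hxh' hh2, integral_sub_one_mul_eq_integral_mul hint hzero hxh]
  ring

/-- Properties of the auxiliary function `h₀(x) = h(x) − (x−1)e^{−x}·∫₀^∞ s·h(s) ds`. -/
theorem stmt_15 (h : ℝ → ℝ) (hmeas : Measurable h)
    (hint : IntegrableOn h (Ioi 0))
    (hzero : (∫ x in Ioi (0:ℝ), h x) = 0)
    (hxh : IntegrableOn (fun x => x * h x) (Ioi 0))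
    (hh2 : IntegrableOn (fun x => (h x)^2 * exp x) (Ioi 0))
    (h₀ : ℝ → ℝ)
    (h₀def : ∀ x, h₀ x = h x - (x - 1) * exp (-x) * (∫ s in Ioi (0:ℝ), s * h s)) :
    (∫ x in Ioi (0:ℝ), (h₀ x)^2 * exp x) =
      (∫ x in Ioi (0:ℝ), (h x)^2 * exp x) - (∫ x in Ioi (0:ℝ), x * h x)^2 ∧
    (∫ x in Ioi (0:ℝ), psi x * h₀ x) = (∫ x in Ioi (0:ℝ), psi x * h x) :=
  stmt_15_general h hint hzero hxh hh2 h₀ h₀def
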